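/- arXiv:1308.0480 — 3 statements merged into one kernel-verified Lean document; each statement's English description precedes it below -/
import Mathlib

section
/- If a cubic multipole with m semiedges admits a Tait coloring (proper 3-edge-coloring including semiedges) in which m_i semiedges receive color i for i=1,2,3, then m_1 ≡ m_2 ≡ m_3 ≡ m (mod 2). -/
/-- A (cubic) multipole: finitely many vertices `V`, internal edges `E` (with ordered
endpoints `ends`), semiedges `S` each incident to a vertex via `vinc`, and free edges `F`
(isolated edges consisting of two paired semiedges). -/
structure Multipole where
  V : Type
  E : Type
  S : Type
  F : Type
  [fV : Fintype V]
  [fE : Fintype E]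
  [fS : Fintype S]
  [fF : Fintype F]
  ends : E → V × V
  vinc : S → V

namespace Multipole

variable (M : Multipole)

/-- The incidences ("items") at the vertices of a multipole: edge-ends and semiedges. -/
abbrev Item : Type := (M.E × Bool) ⊕ M.S

/-- The vertex at which an item is incident. -/
def itemAt : M.Item → M.V
  | Sum.inl (e, b) => cond b (M.ends e).2 (M.ends e).1
  | Sum.inr s => M.vinc s

/-- The color of an item under an assignment of colors to edges and semiedges. -/
def itemCol (φE : M.E → Fin 3) (φS : M.S → Fin 3) : M.Item → Fin 3
  | Sum.inl (e, _) => φE e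
  | Sum.inr s => φS s

/-- A multipole is cubic when every vertex has exactly 3 incidences
(edge-ends plus semiedges). -/
def IsCubic : Prop := ∀ v : M.V, Nat.card {i : M.Item // M.itemAt i = v} = 3

/-- A Tait coloring: edges and semiedges are colored with 3 colors so that distinct
incidences at a common vertex receive distinct colors. (A free edge carries a single
color, shared by its two semiedges, and imposes no constraint.) -/
def IsTait (φE : M.E → Fin 3) (φS : M.S → Fin 3) : Prop :=
  ∀ i j : M.Item, i ≠ j → M.itemAt i = M.itemAt j →
    M.itemCol φE φS i ≠ M.itemCol φE φS j

/-- The number of semiedges: each free edge contributes two semiedges. -/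
noncomputable def numSemiedges : ℕ := Nat.card M.S + 2 * Nat.card M.F

end Multipole

/-! Counting the incidences of a cubic multipole in two ways — all of them (`3|V| = 2|E| + |S|`)
and those of a fixed color `c` (`|V| = 2|E_c| + |S_c|`, since a Tait coloring uses every color
exactly once at each vertex) — gives `|S_c| ≡ |V| ≡ |S| (mod 2)`; free edges add even amounts. -/

theorem Nat.card_eq_mul_card_of_card_fiber_eq {α β : Type*} [Finite α] [Fintype β]
    (g : α → β) (k : ℕ) (hg : ∀ b, Nat.card {a // g a = b} = k) :
    Nat.card α = k * Nat.card β := by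
  rw [← Nat.card_congr (Equiv.sigmaFiberEquiv g), Nat.card_sigma]
  simp [hg, Nat.card_eq_fintype_card, mul_comm]

theorem Nat.card_fiber_eq_of_bijective_on_fibers {α β γ : Type*} (g : α → γ) (f : α → β)
    (hf : ∀ x, Function.Bijective fun a : {a // g a = x} => f a) (b : β) :
    Nat.card {a // f a = b} = Nat.card γ := by
  refine Nat.card_eq_of_bijective (fun a : {a // f a = b} => g a) ⟨?_, fun x => ?_⟩
  · rintro ⟨a, ha⟩ ⟨a', ha'⟩ hgaa'
    have := (hf (g a')).1 (a₁ := ⟨a, hgaa'⟩) (a₂ := ⟨a', rfl⟩) (ha.trans ha'.symm)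
    simpa using congrArg Subtype.val this
  · obtain ⟨⟨a, hga⟩, hfa⟩ := (hf x).2 b
    exact ⟨⟨a, hfa⟩, hga⟩

namespace Multipole

variable (M : Multipole)

instance : Fintype M.V := M.fV
instance : Fintype M.E := M.fE
instance : Fintype M.S := M.fS

theorem card_item : Nat.card M.Item = 2 * Nat.card M.E + Nat.card M.S := by
  simp [mul_comm]

theorem card_item_eq_three_mul (hcubic : M.IsCubic) : Nat.card M.Item = 3 * Nat.card M.V :=
  Nat.card_eq_mul_card_of_card_fiber_eq M.itemAt 3 hcubic

theorem card_item_itemCol_eq (φE : M.E → Fin 3) (φS : M.S → Fin 3) (c : Fin 3) :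
    Nat.card {i // M.itemCol φE φS i = c} =
      2 * Nat.card {e // φE e = c} + Nat.card {s // φS s = c} := by
  have hedges : {x : M.E × Bool // M.itemCol φE φS (.inl x) = c} ≃ {e // φE e = c} × Bool :=
    Equiv.prodSubtypeFstEquivSubtypeProd (p := fun e => φE e = c)
  rw [Nat.card_congr Equiv.subtypeSum, Nat.card_sum, Nat.card_congr hedges, Nat.card_prod]
  simp [itemCol, mul_comm]

theorem bijective_itemCol_on_itemAt_fiber {φE : M.E → Fin 3} {φS : M.S → Fin 3}
    (hcubic : M.IsCubic) (hTait : M.IsTait φE φS) (v : M.V) :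
    Function.Bijective fun i : {i // M.itemAt i = v} => M.itemCol φE φS i := by
  refine (Nat.bijective_iff_injective_and_card _).2 ⟨?_, by simp [hcubic v]⟩
  rintro ⟨i, hi⟩ ⟨j, hj⟩ hij
  by_contra hne
  exact hTait i j (fun h => hne (Subtype.ext h)) (hi.trans hj.symm) hij

end Multipole

open Multipole in
/-- **The Parity Lemma.** If a cubic multipole with `m` semiedges admits a Tait coloring
in which `mᵢ` semiedges receive color `i`, then `m₁ ≡ m₂ ≡ m₃ ≡ m (mod 2)`. -/
theorem parity_lemma (M : Multipole) (hcubic : M.IsCubic)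
    (φE : M.E → Fin 3) (φS : M.S → Fin 3) (φF : M.F → Fin 3)
    (hTait : M.IsTait φE φS) :
    ∀ c : Fin 3,
      (Nat.card {s : M.S // φS s = c} + 2 * Nat.card {f : M.F // φF f = c}) % 2
        = M.numSemiedges % 2 := by
  intro c
  have hall := M.card_item_eq_three_mul hcubic
  have hsplit := M.card_item
  have hcolor := M.card_item_itemCol_eq φE φS c
  rw [Nat.card_fiber_eq_of_bijective_on_fibers M.itemAt _
    (M.bijective_itemCol_on_itemAt_fiber hcubic hTait) c] at hcolor
  unfold numSemiedges
  omega
end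

section
/- The number of admissible states of length m, i.e., sequences (s_1,…,s_m) ∈ {1,2,3}^m in which each of the three colors occurs a number of times congruent to m mod 2, counted up to the action of the symmetric group S_3 permuting the colors, equals (3^{m−1} + 2 + 3·(−1)^m)/8 for m ≥ 2. -/
/-- A sequence in `{1,2,3}^m` is admissible if each color occurs a number of times
congruent to `m` mod 2. -/
def Admissible (m : ℕ) (f : Fin m → Fin 3) : Prop :=
  ∀ c : Fin 3, (Finset.univ.filter fun j => f j = c).card % 2 = m % 2

/-- Admissible sequences up to the action of `S_3` permuting the colors. -/
def admSetoid (m : ℕ) : Setoid {f : Fin m → Fin 3 // Admissible m f} where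
  r f g := ∃ π : Equiv.Perm (Fin 3), (g : Fin m → Fin 3) = ⇑π ∘ (f : Fin m → Fin 3)
  iseqv := by
    constructor
    · intro f; exact ⟨1, by ext x; simp⟩
    · rintro f g ⟨π, h⟩; exact ⟨π⁻¹, by rw [h]; ext x; simp⟩
    · rintro f g h ⟨π, h1⟩ ⟨π', h2⟩; exact ⟨π' * π, by rw [h2, h1]; ext x; simp⟩


open Finset

def cnt (m : ℕ) (p : Fin 3 → ZMod 2) : ℕ :=
  (Finset.univ.filter fun f : Fin m → Fin 3 =>
    ∀ c, ((Finset.univ.filter fun j => f j = c).card : ZMod 2) = p c).card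

def wt (p : Fin 3 → ZMod 2) : ℤ := ∑ c, ((p c).val : ℤ)

lemma count_cons {m : ℕ} (x : Fin 3) (f : Fin m → Fin 3) (c : Fin 3) :
    (Finset.univ.filter fun j : Fin (m+1) => (Fin.cons x f : Fin (m+1) → Fin 3) j = c).card
      = (if x = c then 1 else 0) + (Finset.univ.filter fun j => f j = c).card := by
  rw [Finset.card_filter, Finset.card_filter, Fin.sum_univ_succ]
  simp

lemma cnt_succ (m : ℕ) (p : Fin 3 → ZMod 2) :
    cnt (m+1) p = ∑ x : Fin 3, cnt m (fun c => p c - if x = c then 1 else 0) := by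
  unfold cnt
  rw [Finset.card_filter, ← (Fin.consEquiv (fun _ : Fin (m+1) => Fin 3)).sum_comp,
    Fintype.sum_prod_type]
  refine Finset.sum_congr rfl fun x _ => ?_
  rw [Finset.card_filter]
  refine Finset.sum_congr rfl fun f _ => ?_
  congr 1
  simp only [Fin.consEquiv_apply, eq_iff_iff]
  constructor
  · intro h c
    rw [eq_sub_iff_add_eq, ← h c, count_cons]
    push_cast
    ring
  · intro h c
    rw [count_cons]
    push_cast
    rw [h c]
    ring



lemma zmod2_cases : ∀ x : ZMod 2, x = 0 ∨ x = 1 := by decide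

lemma fin3_cases : ∀ x : Fin 3, x = 0 ∨ x = 1 ∨ x = 2 := by decide

lemma wt_sub_delta (p : Fin 3 → ZMod 2) (x : Fin 3) :
    wt (fun c => p c - if x = c then 1 else 0) = wt p + 1 - 2 * ((p x).val : ℤ) := by
  unfold wt
  rw [Fin.sum_univ_three, Fin.sum_univ_three]
  rcases zmod2_cases (p 0) with h0 | h0 <;> rcases zmod2_cases (p 1) with h1 | h1 <;>
    rcases zmod2_cases (p 2) with h2 | h2 <;>
    rcases fin3_cases x with hx | hx | hx <;> subst hx <;>
    simp only [h0, h1, h2] <;> decide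


lemma forall_fin3 (P : Fin 3 → Prop) : (∀ c, P c) ↔ P 0 ∧ P 1 ∧ P 2 := by
  constructor
  · intro h; exact ⟨h 0, h 1, h 2⟩
  · rintro ⟨a, b, c⟩ x
    rcases fin3_cases x with hx | hx | hx <;> subst hx <;> assumption

lemma cnt_zero (p : Fin 3 → ZMod 2) :
    cnt 0 p = if (p 0 = 0 ∧ p 1 = 0 ∧ p 2 = 0) then 1 else 0 := by
  unfold cnt
  have h : ∀ f : Fin 0 → Fin 3,
      (∀ c, ((Finset.univ.filter fun j => f j = c).card : ZMod 2) = p c) ↔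
        (p 0 = 0 ∧ p 1 = 0 ∧ p 2 = 0) := by
    intro f
    rw [← forall_fin3 (fun c => p c = 0)]
    constructor <;> intro h c <;> have := h c <;> simpa [eq_comm] using this
  rw [Finset.filter_congr (fun f _ => by rw [h f]), Finset.filter_const,
    apply_ite Finset.card]
  simp

lemma cnt_formula (m : ℕ) (p : Fin 3 → ZMod 2) :
    (4 * cnt m p : ℤ) =
      if p 0 + p 1 + p 2 = (m : ZMod 2) then 3 ^ m + 3 - 2 * wt p else 0 := by
  induction m generalizing p with
  | zero =>
    rw [cnt_zero]
    have hw : wt p = ((p 0).val : ℤ) + ((p 1).val : ℤ) + ((p 2).val : ℤ) := by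
      rw [wt, Fin.sum_univ_three]
    rw [hw]
    rcases zmod2_cases (p 0) with h0 | h0 <;> rcases zmod2_cases (p 1) with h1 | h1 <;>
      rcases zmod2_cases (p 2) with h2 | h2 <;> simp only [h0, h1, h2] <;> decide
  | succ n ih =>
    rw [cnt_succ]
    push_cast [Finset.mul_sum]
    have hrw : ∀ x : Fin 3, (4 * (cnt n (fun c => p c - if x = c then 1 else 0)) : ℤ)
        = if p 0 + p 1 + p 2 = (n : ZMod 2) + 1 then
            3 ^ n + 3 - 2 * (wt p + 1 - 2 * ((p x).val : ℤ)) else 0 := by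
      intro x
      rw [ih, wt_sub_delta]
      congr 1
      rw [eq_iff_iff]
      have h : ((p 0 - if x = 0 then 1 else 0) + (p 1 - if x = 1 then 1 else 0)
          + (p 2 - if x = 2 then 1 else 0)) = p 0 + p 1 + p 2 - 1 := by
        rcases fin3_cases x with hx | hx | hx <;> subst hx <;> simp <;> ring
      rw [h, sub_eq_iff_eq_add]
    simp only [hrw]
    by_cases hcond : p 0 + p 1 + p 2 = (n : ZMod 2) + 1
    · simp only [if_pos hcond]
      rw [Fin.sum_univ_three, pow_succ]
      have hw : ((p 0).val : ℤ) + ((p 1).val : ℤ) + ((p 2).val : ℤ) = wt p := by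
        rw [wt, Fin.sum_univ_three]
      linarith [hw]
    · simp only [if_neg hcond, Finset.sum_const_zero]

instance (m : ℕ) : DecidablePred (Admissible m) := fun f => by
  unfold Admissible; infer_instance

lemma four_mul_card_adm (m : ℕ) :
    (4 * Nat.card {f : Fin m → Fin 3 // Admissible m f} : ℤ) = 3 ^ m + 3 * (-1) ^ m := by
  have h1 : Nat.card {f : Fin m → Fin 3 // Admissible m f}
      = cnt m (fun _ => (m : ZMod 2)) := by
    rw [Nat.card_eq_fintype_card, Fintype.card_subtype, cnt]
    congr 1
    ext f
    simp only [Finset.mem_filter, Finset.mem_univ, true_and]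
    unfold Admissible
    refine forall_congr' fun c => ?_
    rw [ZMod.natCast_eq_natCast_iff']
  rw [h1, cnt_formula]
  have hcond : ((m : ZMod 2) + (m : ZMod 2) + (m : ZMod 2)) = (m : ZMod 2) := by
    have : ((m : ZMod 2) + (m : ZMod 2)) = 0 := by
      rcases zmod2_cases (m : ZMod 2) with h | h <;> rw [h] <;> decide
    rw [add_comm, ← add_assoc, this, zero_add]
  rw [if_pos hcond]
  have hwt : wt (fun _ => (m : ZMod 2)) = 3 * ((m % 2 : ℕ) : ℤ) := by
    rw [wt, Fin.sum_univ_three, ZMod.val_natCast]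
    push_cast
    ring
  rw [hwt]
  rcases Nat.even_or_odd m with h | h
  · rw [Even.neg_one_pow h, Nat.even_iff.mp h]
    norm_num
  · rw [Odd.neg_one_pow h, Nat.odd_iff.mp h]
    push_cast
    ring

lemma comp_admissible {m : ℕ} (π : Equiv.Perm (Fin 3)) {f : Fin m → Fin 3}
    (hf : Admissible m f) : Admissible m (⇑π ∘ f) := by
  intro c
  have h : (Finset.univ.filter fun j => (⇑π ∘ f) j = c)
      = Finset.univ.filter fun j => f j = π⁻¹ c := by
    ext j
    simp only [Finset.mem_filter, Finset.mem_univ, true_and, Function.comp_apply]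
    constructor
    · intro h; rw [← h]; simp
    · intro h; rw [h]; simp
  rw [h]
  exact hf (π⁻¹ c)

instance admSMul (m : ℕ) : SMul (Equiv.Perm (Fin 3)) {f : Fin m → Fin 3 // Admissible m f} :=
  ⟨fun π f => ⟨⇑π ∘ (f : Fin m → Fin 3), comp_admissible π f.2⟩⟩

lemma smul_coe {m : ℕ} (π : Equiv.Perm (Fin 3)) (f : {f : Fin m → Fin 3 // Admissible m f}) :
    ((π • f : {f : Fin m → Fin 3 // Admissible m f}) : Fin m → Fin 3) = ⇑π ∘ (f : Fin m → Fin 3) :=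
  rfl

instance admAction (m : ℕ) : MulAction (Equiv.Perm (Fin 3)) {f : Fin m → Fin 3 // Admissible m f} where
  one_smul f := Subtype.ext (by rw [smul_coe]; ext j; simp)
  mul_smul π π' f := Subtype.ext (by rw [smul_coe, smul_coe, smul_coe]; ext j; simp)

lemma admSetoid_eq (m : ℕ) :
    admSetoid m = MulAction.orbitRel (Equiv.Perm (Fin 3)) {f : Fin m → Fin 3 // Admissible m f} := by
  ext f g
  show (∃ π : Equiv.Perm (Fin 3), (g : Fin m → Fin 3) = ⇑π ∘ (f : Fin m → Fin 3))
    ↔ f ∈ MulAction.orbit (Equiv.Perm (Fin 3)) g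
  constructor
  · rintro ⟨π, h⟩
    exact ⟨π⁻¹, Subtype.ext (by rw [smul_coe, h]; ext j; simp)⟩
  · rintro ⟨π, h⟩
    exact ⟨π⁻¹, by rw [← h, smul_coe]; ext j; simp⟩

lemma perm3_fix_unique : ∀ π : Equiv.Perm (Fin 3), π ≠ 1 →
    ∀ a b : Fin 3, π a = a → π b = b → a = b := by decide

lemma fin3_succ_ne : ∀ c : Fin 3, c + 1 ≠ c := by decide

lemma card_fixedBy_ne_one {m : ℕ} (hm : 1 ≤ m) (π : Equiv.Perm (Fin 3)) (hπ : π ≠ 1)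
    [Fintype (MulAction.fixedBy {f : Fin m → Fin 3 // Admissible m f} π)] :
    Fintype.card (MulAction.fixedBy {f : Fin m → Fin 3 // Admissible m f} π)
      = if (∃ c, π c = c) ∧ Even m then 1 else 0 := by
  have key : ∀ (f : {f : Fin m → Fin 3 // Admissible m f}),
      f ∈ MulAction.fixedBy {f : Fin m → Fin 3 // Admissible m f} π
        ↔ ∀ j, π ((f : Fin m → Fin 3) j) = (f : Fin m → Fin 3) j := by
    intro f
    rw [MulAction.mem_fixedBy]
    constructor
    · intro h j
      exact congrFun (congrArg Subtype.val h) j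
    · intro h
      exact Subtype.ext (funext fun j => h j)
  split
  case isTrue h =>
    obtain ⟨⟨c, hc⟩, hev⟩ := h
    have hadm : Admissible m (fun _ : Fin m => c) := by
      intro c'
      by_cases hcc : c = c'
      · subst hcc
        rw [Finset.filter_true_of_mem (fun j _ => rfl)]
        simp
      · rw [Finset.filter_false_of_mem (fun j _ => hcc), Finset.card_empty]
        rw [Nat.even_iff.mp hev]
    rw [Fintype.card_eq_one_iff]
    refine ⟨⟨⟨fun _ => c, hadm⟩, (key _).mpr fun j => hc⟩, ?_⟩
    rintro ⟨⟨f, hf⟩, hfix⟩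
    have hj := (key _).mp hfix
    refine Subtype.ext (Subtype.ext (funext fun j => ?_))
    exact perm3_fix_unique π hπ (f j) c (hj j) hc
  case isFalse h =>
    rw [Fintype.card_eq_zero_iff]
    constructor
    rintro ⟨⟨f, hf⟩, hfix⟩
    have hj := (key _).mp hfix
    set j0 : Fin m := ⟨0, hm⟩ with hj0
    have hex : ∃ c, π c = c := ⟨f j0, hj j0⟩
    have hodd : ¬ Even m := fun he => h ⟨hex, he⟩
    have hconst : ∀ j, f j = f j0 := fun j =>
      perm3_fix_unique π hπ (f j) (f j0) (hj j) (hj j0)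
    have hne := fin3_succ_ne (f j0)
    have h0 := hf (f j0 + 1)
    rw [Finset.filter_false_of_mem (fun j _ => by rw [hconst j]; exact fun hh => hne hh.symm),
      Finset.card_empty] at h0
    rw [Nat.even_iff] at hodd
    omega

lemma perm3_filter_card :
    (Finset.univ.filter fun π : Equiv.Perm (Fin 3) => π ≠ 1 ∧ ∃ c, π c = c).card = 3 := by
  decide

/-- The number of admissible states of length `m`, counted up to permutation of the three
colors, equals `(3^{m−1} + 2 + 3·(−1)^m)/8` for `m ≥ 2`. -/
theorem card_admissible_states (m : ℕ) (hm : 2 ≤ m) :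
    (8 * Nat.card (Quotient (admSetoid m)) : ℤ) = 3 ^ (m - 1) + 2 + 3 * (-1) ^ m := by
  set β := {f : Fin m → Fin 3 // Admissible m f} with hβ
  letI : ∀ π : Equiv.Perm (Fin 3), Fintype (MulAction.fixedBy β π) :=
    fun π => Fintype.ofFinite _
  letI : Fintype (Quotient (MulAction.orbitRel (Equiv.Perm (Fin 3)) β)) := Fintype.ofFinite _
  have hburn := MulAction.sum_card_fixedBy_eq_card_orbits_mul_card_group (Equiv.Perm (Fin 3)) β
  set E : ℕ := if Even m then 1 else 0 with hE
  have hpt : ∀ π : Equiv.Perm (Fin 3), Fintype.card (MulAction.fixedBy β π)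
      = (if π = 1 then Fintype.card β else 0)
        + (if π ≠ 1 ∧ ∃ c, π c = c then E else 0) := by
    intro π
    by_cases h1 : π = 1
    · subst h1
      simp only [if_pos rfl, ne_eq, not_true_eq_false, false_and, if_false, add_zero]
      calc Fintype.card (MulAction.fixedBy β (1 : Equiv.Perm (Fin 3)))
          = Nat.card (MulAction.fixedBy β (1 : Equiv.Perm (Fin 3))) :=
            Nat.card_eq_fintype_card.symm
        _ = Nat.card β := by
            rw [MulAction.fixedBy_one_eq_univ]
            exact Nat.card_congr (Equiv.Set.univ β)
        _ = Fintype.card β := Nat.card_eq_fintype_card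
    · rw [if_neg h1, zero_add, card_fixedBy_ne_one (by omega) π h1]
      by_cases h2 : ∃ c, π c = c
      · by_cases h3 : Even m
        · rw [if_pos ⟨h2, h3⟩, if_pos ⟨h1, h2⟩, hE, if_pos h3]
        · rw [if_neg (fun hc => h3 hc.2), if_pos ⟨h1, h2⟩, hE, if_neg h3]
      · rw [if_neg (fun hc => h2 hc.1), if_neg (fun hc => h2 hc.2)]
  rw [Finset.sum_congr rfl (fun π _ => hpt π), Finset.sum_add_distrib,
    Finset.sum_ite_eq' Finset.univ (1 : Equiv.Perm (Fin 3)) (fun _ => Fintype.card β),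
    ← Finset.sum_filter, Finset.sum_const, perm3_filter_card] at hburn
  simp only [Finset.mem_univ, if_true, smul_eq_mul] at hburn
  have hg : Fintype.card (Equiv.Perm (Fin 3)) = 6 := by
    rw [Fintype.card_perm]
    decide
  rw [hg] at hburn
  -- hburn : Fintype.card β + 3 * E = card Ω * 6
  have hQ : Nat.card (Quotient (admSetoid m)) =
      Fintype.card (Quotient (MulAction.orbitRel (Equiv.Perm (Fin 3)) β)) := by
    rw [admSetoid_eq]
    exact Nat.card_eq_fintype_card
  have hN := four_mul_card_adm m
  rw [Nat.card_eq_fintype_card] at hN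
  have h3m : (3 : ℤ) ^ m = 3 * 3 ^ (m - 1) := by
    conv_lhs => rw [show m = (m - 1) + 1 by omega]
    rw [pow_succ]
    ring
  have hburnz : (Fintype.card β : ℤ) + 3 * (E : ℤ)
      = (Fintype.card (Quotient (MulAction.orbitRel (Equiv.Perm (Fin 3)) β)) : ℤ) * 6 := by
    exact_mod_cast congrArg (Nat.cast : ℕ → ℤ) hburn
  rw [hQ]
  rcases Nat.even_or_odd m with h | h
  · rw [Even.neg_one_pow h] at *
    rw [hE, if_pos h] at hburnz
    push_cast at hburnz
    rw [h3m] at hN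
    linarith
  · rw [Odd.neg_one_pow h] at *
    rw [hE, if_neg (Nat.not_even_iff_odd.mpr h)] at hburnz
    push_cast at hburnz
    rw [h3m] at hN
    linarith
end

section
/- Let T be a tree multipole with Tait coloring set nonempty, and let ε_1, ε_2, ε_3 be three distinct semiedges with incident vertices v_1, v_2, v_3. If v_1 ≠ v_3 and it is not the case that d(v_1,v_2) = d(v_2,v_3) = 1, then for any two distinct colors a, b there is a Tait coloring of T giving ε_1, ε_2, ε_3 the colors a, b, a respectively. -/
namespace Multipole

variable (M : Multipole)

/-- The underlying simple graph `G[M]` on the vertices of `M`: two vertices are adjacent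
when some internal edge joins them. -/
def graph : SimpleGraph M.V where
  Adj v w := v ≠ w ∧ ∃ e : M.E, M.ends e = (v, w) ∨ M.ends e = (w, v)
  symm := by
    refine ⟨?_⟩
    rintro v w ⟨hvw, e, he⟩
    exact ⟨hvw.symm, e, he.symm⟩
  loopless := by refine ⟨?_⟩; rintro v ⟨hv, -⟩; exact hv rfl

end Multipole

namespace SimpleGraph

variable {V : Type*} {G : SimpleGraph V} {r u v w c : V}

/-- In the tree rooted at `r`, the vertex `w` lies in the branch below `v`. -/
def InBranch (G : SimpleGraph V) (r v w : V) : Prop :=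
  G.dist r w = G.dist r v + G.dist v w

def IsChild (G : SimpleGraph V) (r v c : V) : Prop :=
  G.Adj v c ∧ G.dist r c = G.dist r v + 1

theorem inBranch_self (G : SimpleGraph V) (r v : V) : G.InBranch r v v := by
  simp [InBranch]

theorem inBranch_root (G : SimpleGraph V) (r w : V) : G.InBranch r r w := by
  simp [InBranch]

theorem IsChild.inBranch (hc : G.IsChild r v c) : G.InBranch r v c := by
  rw [InBranch, dist_eq_one_iff_adj.mpr hc.1, hc.2]

theorem IsChild.ne_of_inBranch (hc : G.IsChild r v c) (hw : G.InBranch r c w) : w ≠ v := by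
  rintro rfl
  have := hc.2
  unfold InBranch at hw
  omega

theorem InBranch.trans (hG : G.Connected) (hc : G.InBranch r v c) (hw : G.InBranch r c w) :
    G.InBranch r v w := by
  have h₁ : G.dist r w ≤ G.dist r v + G.dist v w := hG.dist_triangle
  have h₂ : G.dist v w ≤ G.dist v c + G.dist c w := hG.dist_triangle
  unfold InBranch at *
  omega

theorem Connected.exists_isChild_of_inBranch (hG : G.Connected) (hw : G.InBranch r v w)
    (hne : w ≠ v) : ∃ c, G.IsChild r v c ∧ G.InBranch r c w := by
  obtain ⟨p, -, hp⟩ := hG.exists_path_of_dist v w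
  cases p with
  | nil => exact absurd rfl hne
  | @cons _ c _ hvc q =>
    have h₁ : G.dist c w ≤ q.length := dist_le q
    have h₂ : G.dist r c ≤ G.dist r v + 1 :=
      (dist_eq_one_iff_adj.mpr hvc) ▸ hG.dist_triangle
    have h₃ : G.dist r w ≤ G.dist r c + G.dist c w := hG.dist_triangle
    rw [Walk.length_cons] at hp
    unfold InBranch at hw
    exact ⟨c, ⟨hvc, by omega⟩, by unfold InBranch; omega⟩

theorem Connected.dist_lt_card [Fintype V] (hG : G.Connected) (u v : V) :
    G.dist u v < Fintype.card V := by
  obtain ⟨p, hp, hl⟩ := hG.exists_path_of_dist u v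
  exact hl ▸ hp.length_lt

theorem Adj.isChild_root (h : G.Adj r c) : G.IsChild r r c :=
  ⟨h, by simp [dist_eq_one_iff_adj.mpr h]⟩

theorem IsTree.eq_of_dist_add_dist_eq (hG : G.IsTree) {x y : V}
    (hx : G.dist u x + G.dist x w = G.dist u w) (hy : G.dist u y + G.dist y w = G.dist u w)
    (hxy : G.dist u x = G.dist u y) : x = y := by
  obtain ⟨p₁, -, hp₁⟩ := hG.connected.exists_path_of_dist u x
  obtain ⟨p₂, -, hp₂⟩ := hG.connected.exists_path_of_dist x w
  obtain ⟨q₁, -, hq₁⟩ := hG.connected.exists_path_of_dist u y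
  obtain ⟨q₂, -, hq₂⟩ := hG.connected.exists_path_of_dist y w
  have hp : (p₁.append p₂).IsPath :=
    Walk.isPath_of_length_eq_dist _ (by rw [Walk.length_append, hp₁, hp₂, hx])
  have hq : (q₁.append q₂).IsPath :=
    Walk.isPath_of_length_eq_dist _ (by rw [Walk.length_append, hq₁, hq₂, hy])
  have hpq := (hG.existsUnique_path u w).unique hp hq
  have hx' : (p₁.append p₂).getVert p₁.length = x := by
    rw [Walk.getVert_append', if_pos le_rfl, Walk.getVert_length]
  have hy' : (q₁.append q₂).getVert q₁.length = y := by
    rw [Walk.getVert_append', if_pos le_rfl, Walk.getVert_length]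
  rw [← hx', ← hy', hpq, hp₁, hq₁, hxy]

theorem IsTree.isChild_or_isChild (hG : G.IsTree) (r : V) (h : G.Adj v c) :
    G.IsChild r v c ∨ G.IsChild r c v := by
  rcases hG.dist_eq_dist_add_one_of_adj r h with h' | h'
  · exact Or.inr ⟨h.symm, h'⟩
  · exact Or.inl ⟨h, h'⟩

theorem IsTree.eq_of_inBranch_of_inBranch (hG : G.IsTree) (h₁ : G.IsChild r v u)
    (h₂ : G.IsChild r v c) (hu : G.InBranch r u w) (hc : G.InBranch r c w) : u = c :=
  hG.eq_of_dist_add_dist_eq hu.symm hc.symm (h₁.2.trans h₂.2.symm)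

/-- Moving the root from `m` to `c` would bring two of the points closer and the third at most
one step farther. -/
theorem Connected.eq_of_inBranch_of_sum_dist_le (hG : G.Connected) {m c : V} (v : Fin 3 → V)
    (hc : G.Adj m c) (hm : ∑ k, G.dist m (v k) ≤ ∑ k, G.dist c (v k)) {k j : Fin 3}
    (hk : G.InBranch m c (v k)) (hj : G.InBranch m c (v j)) : k = j := by
  have hmc : G.dist m c = 1 := dist_eq_one_iff_adj.mpr hc
  have hcm : G.dist c m = 1 := dist_eq_one_iff_adj.mpr hc.symm
  have htri : ∀ i, G.dist c (v i) ≤ G.dist m (v i) + 1 := fun i => by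
    have : G.dist c (v i) ≤ G.dist c m + G.dist m (v i) := hG.dist_triangle
    omega
  have h₀ := htri 0
  have h₁ := htri 1
  have h₂ := htri 2
  unfold InBranch at hk hj
  rw [Fin.sum_univ_three, Fin.sum_univ_three] at hm
  fin_cases k <;> fin_cases j <;> simp at hk hj ⊢ <;> omega

end SimpleGraph

theorem injective_vec_three {α : Type*} {a b c : α} (hab : a ≠ b) (hac : a ≠ c) (hbc : b ≠ c) :
    Function.Injective ![a, b, c] := by
  intro i j h
  fin_cases i <;> fin_cases j <;> simp_all [eq_comm]

namespace Multipole

open SimpleGraph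

variable {M : Multipole}

def farEnd (p : M.E × Bool) : M.V := M.itemAt (.inl (p.1, !p.2))

theorem graph_adj_farEnd (hloop : ∀ e : M.E, (M.ends e).1 ≠ (M.ends e).2) (p : M.E × Bool) :
    M.graph.Adj (M.itemAt (.inl p)) (M.farEnd p) := by
  obtain ⟨e, _ | _⟩ := p
  · exact ⟨hloop e, e, Or.inl rfl⟩
  · exact ⟨(hloop e).symm, e, Or.inr rfl⟩

theorem exists_farEnd_of_adj {x y : M.V} (h : M.graph.Adj x y) :
    ∃ p, M.itemAt (.inl p) = x ∧ M.farEnd p = y := by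
  obtain ⟨-, e, he | he⟩ := h
  · exact ⟨(e, false), by simp [itemAt, he], by simp [farEnd, itemAt, he]⟩
  · exact ⟨(e, true), by simp [itemAt, he], by simp [farEnd, itemAt, he]⟩

theorem eq_of_itemAt_eq_of_farEnd_eq (hloop : ∀ e : M.E, (M.ends e).1 ≠ (M.ends e).2)
    (hsimple : Function.Injective fun e : M.E => s((M.ends e).1, (M.ends e).2))
    {p p' : M.E × Bool} (h₁ : M.itemAt (.inl p) = M.itemAt (.inl p'))
    (h₂ : M.farEnd p = M.farEnd p') : p = p' := by
  have hends : ∀ q : M.E × Bool,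
      s(M.itemAt (.inl q), M.farEnd q) = s((M.ends q.1).1, (M.ends q.1).2) := by
    rintro ⟨e, _ | _⟩
    · rfl
    · exact Sym2.eq_swap
  obtain ⟨e, b⟩ := p
  obtain ⟨e', b'⟩ := p'
  obtain rfl : e = e' := hsimple <| (hends (e, b)).symm.trans <| h₁ ▸ h₂ ▸ hends (e', b')
  cases b <;> cases b' <;> first | rfl | exact absurd h₁ (hloop e) | exact absurd h₁.symm (hloop e)

theorem exists_pair_itemAt (hcubic : M.IsCubic) {P : M.Item} {v : M.V} (hP : M.itemAt P = v) :
    ∃ I J, I ≠ P ∧ J ≠ P ∧ I ≠ J ∧ ∀ t, M.itemAt t = v ↔ t = P ∨ t = I ∨ t = J := by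
  have h2 : ({t | M.itemAt t = v} \ {P}).ncard = 2 := by
    rw [Set.ncard_sdiff_singleton_of_mem (s := {t | M.itemAt t = v}) hP, ← Nat.card_coe_set_eq]
    exact congrArg (· - 1) (hcubic v)
  obtain ⟨I, J, hIJ, hS⟩ := Set.ncard_eq_two.mp h2
  have hS' : ∀ t, (M.itemAt t = v ∧ t ≠ P) ↔ t = I ∨ t = J := fun t => by
    simpa using Set.ext_iff.mp hS t
  refine ⟨I, J, ((hS' I).2 (.inl rfl)).2, ((hS' J).2 (.inr rfl)).2, hIJ, fun t => ?_⟩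
  by_cases htP : t = P
  · simp [htP, hP]
  · simp [htP, ← hS' t]

theorem eq_or_eq_or_eq_of_itemAt (hcubic : M.IsCubic) {v : M.V} {i j k t : M.Item}
    (hi : M.itemAt i = v) (hj : M.itemAt j = v) (hk : M.itemAt k = v)
    (hij : i ≠ j) (hik : i ≠ k) (hjk : j ≠ k) (ht : M.itemAt t = v) :
    t = i ∨ t = j ∨ t = k := by
  obtain ⟨I, J, -, -, -, hitems⟩ := exists_pair_itemAt hcubic hi
  have := (hitems j).1 hj
  have := (hitems k).1 hk
  have := (hitems t).1 ht
  grind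

theorem exists_coloring_of_items (hcubic : M.IsCubic) {v : M.V} {t : Fin 3 → M.Item}
    (ht : ∀ k, M.itemAt (t k) = v) (ht_inj : Function.Injective t) {x : Fin 3 → Fin 3}
    (hx : Function.Injective x) :
    ∃ col : M.Item → Fin 3,
      (∀ i j, i ≠ j → M.itemAt i = v → M.itemAt j = v → col i ≠ col j) ∧ ∀ k, col (t k) = x k := by
  have hcover : ∀ u, M.itemAt u = v → ∃ k, t k = u := fun u hu => by
    rcases eq_or_eq_or_eq_of_itemAt hcubic (ht 0) (ht 1) (ht 2) (ht_inj.ne (by decide))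
      (ht_inj.ne (by decide)) (ht_inj.ne (by decide)) hu with h | h | h
    exacts [⟨0, h.symm⟩, ⟨1, h.symm⟩, ⟨2, h.symm⟩]
  have hinv : ∀ k, Function.invFun t (t k) = k := Function.leftInverse_invFun ht_inj
  refine ⟨fun u => x (Function.invFun t u), fun i j hij hi hj => ?_, fun k => by simp [hinv]⟩
  obtain ⟨k, rfl⟩ := hcover i hi
  obtain ⟨l, rfl⟩ := hcover j hj
  simpa [hinv] using hx.ne fun h => hij (congrArg t h)

def IsTaitAt (φE : M.E → Fin 3) (φS : M.S → Fin 3) (w : M.V) : Prop :=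
  ∀ i j : M.Item, i ≠ j → M.itemAt i = w → M.itemAt j = w →
    M.itemCol φE φS i ≠ M.itemCol φE φS j

theorem isTait_of_forall_isTaitAt {φE : M.E → Fin 3} {φS : M.S → Fin 3}
    (h : ∀ w, M.IsTaitAt φE φS w) : M.IsTait φE φS :=
  fun i j hij hw => h _ i j hij hw rfl

noncomputable def lowerEnd (M : Multipole) (r : M.V) (e : M.E) : M.V :=
  if M.graph.dist r (M.ends e).1 < M.graph.dist r (M.ends e).2 then (M.ends e).2
  else (M.ends e).1

theorem lowerEnd_eq_or (hT : M.graph.IsTree) (hloop : ∀ e : M.E, (M.ends e).1 ≠ (M.ends e).2)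
    (r : M.V) (p : M.E × Bool) :
    M.lowerEnd r p.1 = M.itemAt (.inl p) ∨
      M.graph.IsChild r (M.itemAt (.inl p)) (M.farEnd p) ∧ M.lowerEnd r p.1 = M.farEnd p := by
  rcases hT.isChild_or_isChild r (graph_adj_farEnd hloop p) with h | h <;>
  · have := h.2
    obtain ⟨e, _ | _⟩ := p <;>
    · simp only [farEnd, itemAt, lowerEnd, Bool.not_false, Bool.not_true, cond_true,
        cond_false] at this h ⊢
      split_ifs <;> first | omega | simp [h]

open Classical in
/-- The coloring that is `ψ c` on the branch of each child `c` of `v` and `col` at `v`;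
an edge belongs to the branch containing its endpoint farther from `r`. -/
noncomputable def glue (r v : M.V) (col : M.Item → Fin 3)
    (ψ : M.V → (M.E → Fin 3) × (M.S → Fin 3)) : (M.E → Fin 3) × (M.S → Fin 3) :=
  (fun e => if h : ∃ c, M.graph.IsChild r v c ∧ M.graph.InBranch r c (M.lowerEnd r e)
      then (ψ h.choose).1 e else col (.inl (e, decide ((M.ends e).2 = v))),
   fun s => if h : ∃ c, M.graph.IsChild r v c ∧ M.graph.InBranch r c (M.vinc s)
      then (ψ h.choose).2 s else col (.inr s))

section glue

variable {r v : M.V} {col : M.Item → Fin 3} {ψ : M.V → (M.E → Fin 3) × (M.S → Fin 3)}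

theorem itemCol_glue_of_inBranch (hT : M.graph.IsTree)
    (hloop : ∀ e : M.E, (M.ends e).1 ≠ (M.ends e).2) {c w : M.V}
    (hc : M.graph.IsChild r v c) (hw : M.graph.InBranch r c w) {i : M.Item}
    (hi : M.itemAt i = w) :
    M.itemCol (glue r v col ψ).1 (glue r v col ψ).2 i = M.itemCol (ψ c).1 (ψ c).2 i := by
  have hchoose : ∀ {x} (h : ∃ c, M.graph.IsChild r v c ∧ M.graph.InBranch r c x),
      M.graph.InBranch r c x → h.choose = c := fun h hx =>
    hT.eq_of_inBranch_of_inBranch h.choose_spec.1 hc h.choose_spec.2 hx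
  rcases i with p | s
  · have hlow : M.graph.InBranch r c (M.lowerEnd r p.1) := by
      rcases lowerEnd_eq_or hT hloop r p with h | ⟨hch, h⟩
      · rwa [h, hi]
      · rw [h]
        exact hw.trans hT.connected (hi ▸ hch.inBranch)
    have h : ∃ c, M.graph.IsChild r v c ∧ M.graph.InBranch r c (M.lowerEnd r p.1) :=
      ⟨c, hc, hlow⟩
    simp only [itemCol, glue, dif_pos h, hchoose h hlow]
  · have hs : M.graph.InBranch r c (M.vinc s) := by rwa [← hi] at hw
    have h : ∃ c, M.graph.IsChild r v c ∧ M.graph.InBranch r c (M.vinc s) := ⟨c, hc, hs⟩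
    simp only [itemCol, glue, dif_pos h, hchoose h hs]

theorem itemCol_glue_of_itemAt (hT : M.graph.IsTree)
    (hloop : ∀ e : M.E, (M.ends e).1 ≠ (M.ends e).2)
    (hψ : ∀ p, M.itemAt (.inl p) = v → M.graph.IsChild r v (M.farEnd p) →
      (ψ (M.farEnd p)).1 p.1 = col (.inl p))
    {i : M.Item} (hi : M.itemAt i = v) :
    M.itemCol (glue r v col ψ).1 (glue r v col ψ).2 i = col i := by
  have hnone : ∀ x, x = v → ¬ ∃ c, M.graph.IsChild r v c ∧ M.graph.InBranch r c x := by
    rintro x rfl ⟨c, hc, hx⟩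
    exact hc.ne_of_inBranch hx rfl
  rcases i with p | s
  · rcases lowerEnd_eq_or hT hloop r p with h | ⟨hch, h⟩
    · simp only [itemCol, glue, dif_neg (hnone _ (h.trans hi))]
      obtain ⟨e, _ | _⟩ := p <;> simp only [itemAt, cond_false, cond_true] at hi
      · simp [hi ▸ (hloop e).symm]
      · simp [hi]
    · rw [hi] at hch
      have hx : M.graph.InBranch r (M.farEnd p) (M.lowerEnd r p.1) := h ▸ inBranch_self _ _ _
      have h : ∃ c, M.graph.IsChild r v c ∧ M.graph.InBranch r c (M.lowerEnd r p.1) :=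
        ⟨_, hch, hx⟩
      simp only [itemCol, glue, dif_pos h,
        hT.eq_of_inBranch_of_inBranch h.choose_spec.1 hch h.choose_spec.2 hx]
      exact hψ p hi hch
  · simp only [itemCol, glue, dif_neg (hnone (M.vinc s) hi)]

end glue

theorem exists_glued_coloring (hT : M.graph.IsTree)
    (hloop : ∀ e : M.E, (M.ends e).1 ≠ (M.ends e).2)
    (hsimple : Function.Injective fun e : M.E => s((M.ends e).1, (M.ends e).2))
    (r v : M.V) (col : M.Item → Fin 3)
    (hcol : ∀ i j, i ≠ j → M.itemAt i = v → M.itemAt j = v → col i ≠ col j)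
    (Q : M.V → (M.E → Fin 3) × (M.S → Fin 3) → Prop)
    (hchild : ∀ p, M.itemAt (.inl p) = v → M.graph.IsChild r v (M.farEnd p) →
      ∃ ψ : (M.E → Fin 3) × (M.S → Fin 3), ψ.1 p.1 = col (.inl p) ∧
        (∀ w, M.graph.InBranch r (M.farEnd p) w → M.IsTaitAt ψ.1 ψ.2 w) ∧ Q (M.farEnd p) ψ) :
    ∃ φE φS, (∀ i, M.itemAt i = v → M.itemCol φE φS i = col i) ∧
      (∀ w, M.graph.InBranch r v w → M.IsTaitAt φE φS w) ∧
      ∀ c, M.graph.IsChild r v c →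
        ∃ ψ, Q c ψ ∧ ∀ s, M.graph.InBranch r c (M.vinc s) → φS s = ψ.2 s := by
  have hchild' : ∀ c, M.graph.IsChild r v c → ∃ ψ : (M.E → Fin 3) × (M.S → Fin 3),
      (∀ p, M.itemAt (.inl p) = v → M.farEnd p = c → ψ.1 p.1 = col (.inl p)) ∧
        (∀ w, M.graph.InBranch r c w → M.IsTaitAt ψ.1 ψ.2 w) ∧ Q c ψ := by
    intro c hc
    obtain ⟨p, hp, rfl⟩ := exists_farEnd_of_adj hc.1
    obtain ⟨ψ, hψcol, hψtait, hψQ⟩ := hchild p hp hc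
    refine ⟨ψ, fun p' hp' hpc => ?_, hψtait, hψQ⟩
    rwa [eq_of_itemAt_eq_of_farEnd_eq hloop hsimple (hp'.trans hp.symm) hpc]
  choose! ψ hψcol hψtait hψQ using hchild'
  have hat : ∀ i, M.itemAt i = v → M.itemCol (glue r v col ψ).1 (glue r v col ψ).2 i = col i :=
    fun i hi => itemCol_glue_of_itemAt hT hloop (fun p hp hc => hψcol _ hc p hp rfl) hi
  refine ⟨_, _, hat, fun w hw i j hij hi hj => ?_, fun c hc =>
    ⟨ψ c, hψQ c hc, fun s hs => itemCol_glue_of_inBranch hT hloop hc hs (i := .inr s) rfl⟩⟩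
  by_cases hwv : w = v
  · subst hwv
    rw [hat i hi, hat j hj]
    exact hcol i j hij hi hj
  · obtain ⟨c, hc, hcw⟩ := hT.connected.exists_isChild_of_inBranch hw hwv
    rw [itemCol_glue_of_inBranch hT hloop hc hcw hi, itemCol_glue_of_inBranch hT hloop hc hcw hj]
    exact hψtait c hc w hcw i j hij hi hj

/-- Color `z` on item `t` is compatible with the demand "`s` gets `d`": the second clause is
what the vertex of `s` needs from the edge above it. -/
def Accepts (s : M.S) (d : Fin 3) (t : M.Item) (z : Fin 3) : Prop :=
  (t = .inr s → z = d) ∧ ∀ p, t = .inl p → M.vinc s = M.farEnd p → z ≠ d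

theorem accepts_of_ne {s : M.S} {d z : Fin 3} {t : M.Item} (ht : t ≠ .inr s) (hz : z ≠ d) :
    M.Accepts s d t z :=
  ⟨fun h => absurd h ht, fun _ _ _ => hz⟩

theorem exists_accepts_accepts (hloop : ∀ e : M.E, (M.ends e).1 ≠ (M.ends e).2)
    (hsimple : Function.Injective fun e : M.E => s((M.ends e).1, (M.ends e).2))
    {s : M.S} {d q : Fin 3} {c : M.V} (hq : M.vinc s = c → q ≠ d) {I J : M.Item}
    (hI : M.itemAt I = c) (hJ : M.itemAt J = c) (hIJ : I ≠ J) :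
    ∃ x y, x ≠ q ∧ y ≠ q ∧ x ≠ y ∧ M.Accepts s d I x ∧ M.Accepts s d J y := by
  have key : ∀ {K L : M.Item}, M.itemAt K = c → (∀ z, M.Accepts s d L z) →
      ∃ x y, x ≠ q ∧ y ≠ q ∧ x ≠ y ∧ M.Accepts s d K x ∧ M.Accepts s d L y := by
    intro K L hK hL
    obtain ⟨x, hxq, hx⟩ : ∃ x, x ≠ q ∧ M.Accepts s d K x := by
      by_cases hKs : K = .inr s
      · subst hKs
        exact ⟨d, (hq hK).symm, fun _ => rfl, fun p hp => absurd hp (by simp)⟩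
      · obtain ⟨x, hxq, hxd⟩ := Fin.exists_ne_and_ne_of_two_lt q d (by norm_num)
        exact ⟨x, hxq, accepts_of_ne hKs hxd⟩
    obtain ⟨y, hyq, hyx⟩ := Fin.exists_ne_and_ne_of_two_lt q x (by norm_num)
    exact ⟨x, y, hxq, hyq, hyx.symm, hx, hL y⟩
  by_cases hJfree : ∀ z, M.Accepts s d J z
  · exact key hI hJfree
  -- At most one of `I`, `J` is `s` or an edge towards `vinc s`.
  have hJs : J = .inr s ∨ ∃ p, J = .inl p ∧ M.vinc s = M.farEnd p := by
    by_contra! h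
    exact hJfree fun z => ⟨fun h' => absurd h' h.1, fun p hp hs => absurd hs (h.2 p hp)⟩
  have hnotc : ∀ p, M.itemAt (.inl p) = c → M.farEnd p ≠ c := fun p hp h =>
    (graph_adj_farEnd hloop p).ne (hp.trans h.symm)
  have hIfree : ∀ z, M.Accepts s d I z := by
    intro z
    refine ⟨fun hIs => ?_, fun p hIp hs => ?_⟩ <;> exfalso
    · rcases hJs with hJs | ⟨p, rfl, hs⟩
      · exact hIJ (hIs.trans hJs.symm)
      · subst hIs
        exact hnotc p hJ (hs ▸ hI)
    · subst hIp
      rcases hJs with rfl | ⟨p', rfl, hs'⟩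
      · exact hnotc p hI (hs ▸ hJ)
      · exact hIJ (congrArg _ (eq_of_itemAt_eq_of_farEnd_eq hloop hsimple (hI.trans hJ.symm)
          (hs.symm.trans hs')))
  obtain ⟨x, y, hxq, hyq, hxy, hJx, hIy⟩ := key hJ hIfree
  exact ⟨y, x, hyq, hxq, hxy.symm, hIy, hJx⟩

theorem exists_accepting_coloring (hloop : ∀ e : M.E, (M.ends e).1 ≠ (M.ends e).2)
    (hsimple : Function.Injective fun e : M.E => s((M.ends e).1, (M.ends e).2))
    (hcubic : M.IsCubic) {s : M.S} {d q : Fin 3} {c : M.V} {P : M.Item} (hP : M.itemAt P = c)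
    (hq : M.vinc s = c → q ≠ d) :
    ∃ col : M.Item → Fin 3,
      (∀ i j, i ≠ j → M.itemAt i = c → M.itemAt j = c → col i ≠ col j) ∧ col P = q ∧
        ∀ t, M.itemAt t = c → t ≠ P → M.Accepts s d t (col t) := by
  obtain ⟨I, J, hIP, hJP, hIJ, hitems⟩ := exists_pair_itemAt hcubic hP
  have hI : M.itemAt I = c := (hitems I).2 (.inr (.inl rfl))
  have hJ : M.itemAt J = c := (hitems J).2 (.inr (.inr rfl))
  obtain ⟨x, y, hxq, hyq, hxy, hIx, hJy⟩ := exists_accepts_accepts hloop hsimple hq hI hJ hIJ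
  obtain ⟨col, hcol, hcolt⟩ := exists_coloring_of_items hcubic (v := c) (t := ![P, I, J])
    (fun k => by fin_cases k <;> assumption) (injective_vec_three hIP.symm hJP.symm hIJ)
    (injective_vec_three hxq.symm hyq.symm hxy)
  have hcolI : col I = x := hcolt 1
  have hcolJ : col J = y := hcolt 2
  refine ⟨col, hcol, hcolt 0, fun t ht htP => ?_⟩
  rcases (hitems t).1 ht with rfl | rfl | rfl
  · exact absurd rfl htP
  · rwa [hcolI]
  · rwa [hcolJ]

theorem exists_branch_coloring (hT : M.graph.IsTree)
    (hloop : ∀ e : M.E, (M.ends e).1 ≠ (M.ends e).2)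
    (hsimple : Function.Injective fun e : M.E => s((M.ends e).1, (M.ends e).2))
    (hcubic : M.IsCubic) (r : M.V) (s : M.S) (d : Fin 3) (p : M.E × Bool)
    (hp : M.graph.IsChild r (M.itemAt (.inl p)) (M.farEnd p)) (q : Fin 3)
    (hq : M.vinc s = M.farEnd p → q ≠ d) :
    ∃ ψ : (M.E → Fin 3) × (M.S → Fin 3), ψ.1 p.1 = q ∧
      (∀ w, M.graph.InBranch r (M.farEnd p) w → M.IsTaitAt ψ.1 ψ.2 w) ∧
      (M.graph.InBranch r (M.farEnd p) (M.vinc s) → ψ.2 s = d) := by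
  have := M.fV
  induction hn : Fintype.card M.V - M.graph.dist r (M.farEnd p)
    using Nat.strong_induction_on generalizing p q with
  | _ n ih =>
  set c := M.farEnd p
  set P : M.Item := .inl (p.1, !p.2)
  obtain ⟨col, hcol, hcolP, hacc⟩ := exists_accepting_coloring hloop hsimple hcubic (P := P) rfl hq
  obtain ⟨φE, φS, hat, htait, hbranch⟩ := exists_glued_coloring hT hloop hsimple r c col hcol
    (fun c' ψ => M.graph.InBranch r c' (M.vinc s) → ψ.2 s = d) <| by
      intro p' hp' hc'
      have hne : (.inl p' : M.Item) ≠ P := by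
        intro h
        obtain rfl : p' = (p.1, !p.2) := Sum.inl_injective h
        have h₁ := hc'.2
        have h₂ := hp.2
        rw [show M.farEnd (p.1, !p.2) = M.itemAt (.inl p) by simp [farEnd]] at h₁
        omega
      have hlt := hT.connected.dist_lt_card r (M.farEnd p')
      exact ih _ (by have := hc'.2; omega) p' (hp' ▸ hc') (col (.inl p'))
        ((hacc _ hp' hne).2 p' rfl) rfl
  refine ⟨(φE, φS), (hat P rfl).trans hcolP, htait, fun hs => ?_⟩
  by_cases hsc : M.vinc s = c
  · exact (hat (.inr s) hsc).trans ((hacc (.inr s) hsc (by simp [P])).1 rfl)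
  · obtain ⟨c', hc', hsc'⟩ := hT.connected.exists_isChild_of_inBranch hs hsc
    obtain ⟨ψ, hQ, hagree⟩ := hbranch c' hc'
    exact (hagree s hsc').trans (hQ hsc')

theorem exists_isTait_of_root (hT : M.graph.IsTree)
    (hloop : ∀ e : M.E, (M.ends e).1 ≠ (M.ends e).2)
    (hsimple : Function.Injective fun e : M.E => s((M.ends e).1, (M.ends e).2))
    (hcubic : M.IsCubic) (r : M.V) {ι : Type*} (ε : ι → M.S) (d : ι → Fin 3)
    (col : M.Item → Fin 3)
    (hcol : ∀ i j, i ≠ j → M.itemAt i = r → M.itemAt j = r → col i ≠ col j)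
    (hacc : ∀ k t, M.itemAt t = r → M.Accepts (ε k) (d k) t (col t))
    (hone : ∀ p, M.itemAt (.inl p) = r →
      ∃ k, ∀ j, M.graph.InBranch r (M.farEnd p) (M.vinc (ε j)) → j = k) :
    ∃ φE φS, M.IsTait φE φS ∧ ∀ k, φS (ε k) = d k := by
  obtain ⟨φE, φS, hat, htait, hbranch⟩ := exists_glued_coloring hT hloop hsimple r r col hcol
    (fun c ψ => ∀ k, M.graph.InBranch r c (M.vinc (ε k)) → ψ.2 (ε k) = d k) <| by
      intro p hp hc
      obtain ⟨k, hk⟩ := hone p hp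
      obtain ⟨ψ, hψcol, hψtait, hψk⟩ := exists_branch_coloring hT hloop hsimple hcubic r (ε k)
        (d k) p (hp ▸ hc) (col (.inl p)) ((hacc k _ hp).2 p rfl)
      exact ⟨ψ, hψcol, hψtait, fun j hj => hk j hj ▸ hψk (hk j hj ▸ hj)⟩
  refine ⟨φE, φS, isTait_of_forall_isTaitAt fun w => htait w (inBranch_root _ _ _), fun k => ?_⟩
  by_cases hk : M.vinc (ε k) = r
  · exact (hat (.inr (ε k)) hk).trans ((hacc k (.inr (ε k)) hk).1 rfl)
  · obtain ⟨c, hc, hkc⟩ := hT.connected.exists_isChild_of_inBranch (inBranch_root _ r _) hk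
    obtain ⟨ψ, hQ, hagree⟩ := hbranch c hc
    exact (hagree _ hkc).trans (hQ k hkc)

def LeadsTo (r : M.V) (t : M.Item) (s : M.S) : Prop :=
  t = .inr s ∨ ∃ p, t = .inl p ∧ M.graph.InBranch r (M.farEnd p) (M.vinc s)

theorem exists_leadsTo (hT : M.graph.IsTree) (r : M.V) (s : M.S) :
    ∃ t, M.itemAt t = r ∧ M.LeadsTo r t s := by
  by_cases hs : M.vinc s = r
  · exact ⟨.inr s, hs, .inl rfl⟩
  · obtain ⟨c, hc, hsc⟩ := hT.connected.exists_isChild_of_inBranch (inBranch_root _ r _) hs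
    obtain ⟨p, hp, rfl⟩ := exists_farEnd_of_adj hc.1
    exact ⟨.inl p, hp, .inr ⟨p, rfl, hsc⟩⟩

theorem eq_of_leadsTo (hT : M.graph.IsTree) (hloop : ∀ e : M.E, (M.ends e).1 ≠ (M.ends e).2)
    (hsimple : Function.Injective fun e : M.E => s((M.ends e).1, (M.ends e).2))
    {r : M.V} {s : M.S} {t t' : M.Item} (ht : M.itemAt t = r) (ht' : M.itemAt t' = r)
    (h : M.LeadsTo r t s) (h' : M.LeadsTo r t' s) : t = t' := by
  have hchild : ∀ p, M.itemAt (.inl p) = r → M.graph.IsChild r r (M.farEnd p) :=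
    fun p hp => (hp ▸ graph_adj_farEnd hloop p).isChild_root
  have hnot : ∀ p, M.itemAt (.inl p) = r → M.graph.InBranch r (M.farEnd p) (M.vinc s) →
      M.vinc s ≠ r := fun p hp hs => (hchild p hp).ne_of_inBranch hs
  rcases h with rfl | ⟨p, rfl, hp⟩ <;> rcases h' with rfl | ⟨p', rfl, hp'⟩
  · rfl
  · exact absurd ht (hnot p' ht' hp')
  · exact absurd ht' (hnot p ht hp)
  · exact congrArg _ <| eq_of_itemAt_eq_of_farEnd_eq hloop hsimple (ht.trans ht'.symm) <|
      hT.eq_of_inBranch_of_inBranch (hchild p ht) (hchild p' ht') hp hp'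

theorem exists_isTait_of_leadsTo (hT : M.graph.IsTree)
    (hloop : ∀ e : M.E, (M.ends e).1 ≠ (M.ends e).2)
    (hsimple : Function.Injective fun e : M.E => s((M.ends e).1, (M.ends e).2))
    (hcubic : M.IsCubic) (r : M.V) (ε : Fin 3 → M.S) (d x : Fin 3 → Fin 3)
    (hx : Function.Injective x)
    (hlead : ∀ t k j, M.itemAt t = r → M.LeadsTo r t (ε k) → M.LeadsTo r t (ε j) → k = j)
    (hx₀ : ∀ k, M.vinc (ε k) = r → x k = d k)
    (hx₁ : ∀ k, M.graph.Adj r (M.vinc (ε k)) → x k ≠ d k) :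
    ∃ φE φS, M.IsTait φE φS ∧ ∀ k, φS (ε k) = d k := by
  choose t ht hlt using fun k => exists_leadsTo hT r (ε k)
  have ht_inj : Function.Injective t := fun k j h => hlead (t k) k j (ht k) (hlt k) (h ▸ hlt j)
  obtain ⟨col, hcol, hcolt⟩ := exists_coloring_of_items hcubic ht ht_inj hx
  have hcolx : ∀ u k, M.itemAt u = r → M.LeadsTo r u (ε k) → col u = x k := fun u k hu hk =>
    eq_of_leadsTo hT hloop hsimple (ht k) hu (hlt k) hk ▸ hcolt k
  refine exists_isTait_of_root hT hloop hsimple hcubic r ε d col hcol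
    (fun k u hu => ⟨fun hus => ?_, fun p hup hs => ?_⟩) (fun p hp => ?_)
  · rw [hcolx u k hu (.inl hus)]
    subst hus
    exact hx₀ k hu
  · rw [hcolx u k hu (.inr ⟨p, hup, hs ▸ inBranch_self _ _ _⟩)]
    subst hup
    exact hx₁ k (hs ▸ hu ▸ graph_adj_farEnd hloop p)
  · by_cases h : ∃ k, M.graph.InBranch r (M.farEnd p) (M.vinc (ε k))
    · obtain ⟨k, hk⟩ := h
      exact ⟨k, fun j hj => hlead _ j k hp (.inr ⟨p, rfl, hj⟩) (.inr ⟨p, rfl, hk⟩)⟩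
    · exact ⟨0, fun j hj => absurd ⟨j, hj⟩ h⟩

theorem leadsTo_unique_of_isMin (hT : M.graph.IsTree)
    (hloop : ∀ e : M.E, (M.ends e).1 ≠ (M.ends e).2) {m : M.V} (ε : Fin 3 → M.S)
    (hε : Function.Injective ε)
    (hm : ∀ w, ∑ k, M.graph.dist m (M.vinc (ε k)) ≤ ∑ k, M.graph.dist w (M.vinc (ε k))) :
    ∀ t k j, M.itemAt t = m → M.LeadsTo m t (ε k) → M.LeadsTo m t (ε j) → k = j := by
  rintro t k j ht (rfl | ⟨p, rfl, hk⟩) (h | ⟨p', h, hj⟩)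
  · exact hε (Sum.inr_injective h)
  · cases h
  · cases h
  · obtain rfl := Sum.inl_injective h
    exact hT.connected.eq_of_inBranch_of_sum_dist_le _ (ht ▸ graph_adj_farEnd hloop p) (hm _)
      hk hj

end Multipole

/-- `D k` is the distance from the root to `vₖ`: the root item towards `vₖ` is the semiedge
itself when `D k = 0` and an edge into the vertex of the semiedge when `D k = 1`. -/
theorem exists_root_colors {a b : Fin 3} (hab : a ≠ b) (D : Fin 3 → ℕ)
    (h₀₂ : D 0 ≠ 0 ∨ D 2 ≠ 0) (h₁ : D 1 = 0 → D 0 ≠ 1 ∨ D 2 ≠ 1) :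
    ∃ x : Fin 3 → Fin 3, Function.Injective x ∧
      (∀ k, D k = 0 → x k = ![a, b, a] k) ∧ ∀ k, D k = 1 → x k ≠ ![a, b, a] k := by
  obtain ⟨c, hca, hcb⟩ := Fin.exists_ne_and_ne_of_two_lt a b (by norm_num)
  have hba := hab.symm
  have hac := hca.symm
  have hbc := hcb.symm
  by_cases hD₁ : D 1 = 0
  · by_cases h : D 0 = 0 ∨ D 2 = 1
    · refine ⟨![a, b, c], injective_vec_three hab hac hbc, ?_, ?_⟩ <;>
        intro k hk <;> fin_cases k <;> simp_all
    · refine ⟨![c, b, a], injective_vec_three hcb hca hba, ?_, ?_⟩ <;>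
        intro k hk <;> fin_cases k <;> simp_all
  · by_cases hD₀ : D 0 = 0
    · refine ⟨![a, c, b], injective_vec_three hac hab hcb, ?_, ?_⟩ <;>
        intro k hk <;> fin_cases k <;> simp_all
    · by_cases hD₂ : D 2 = 0
      · refine ⟨![b, c, a], injective_vec_three hbc hba hca, ?_, ?_⟩ <;>
          intro k hk <;> fin_cases k <;> simp_all
      · refine ⟨![b, a, c], injective_vec_three hba hbc hac, ?_, ?_⟩ <;>
          intro k hk <;> fin_cases k <;> simp_all

theorem tree_multipole_aba_state_general (M : Multipole) (hcubic : M.IsCubic)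
    (hloopless : ∀ e : M.E, (M.ends e).1 ≠ (M.ends e).2)
    (hsimple : Function.Injective (fun e : M.E => s((M.ends e).1, (M.ends e).2)))
    (htree : M.graph.IsTree)
    (ε₁ ε₂ ε₃ : M.S)
    (h12 : ε₁ ≠ ε₂) (h23 : ε₂ ≠ ε₃)
    (hv13 : M.vinc ε₁ ≠ M.vinc ε₃)
    (hmid : ¬(M.graph.dist (M.vinc ε₁) (M.vinc ε₂) = 1 ∧
              M.graph.dist (M.vinc ε₂) (M.vinc ε₃) = 1)) :
    ∀ a b : Fin 3, a ≠ b →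
      ∃ φE φS, M.IsTait φE φS ∧ φS ε₁ = a ∧ φS ε₂ = b ∧ φS ε₃ = a := by
  intro a b hab
  set ε : Fin 3 → M.S := ![ε₁, ε₂, ε₃]
  have hε : Function.Injective ε :=
    injective_vec_three h12 (fun h => hv13 (congrArg M.vinc h)) h23
  -- Rooted at a vertex minimising the total distance to `v₁, v₂, v₃`, every branch below the
  -- root contains at most one of them.
  have : Nonempty M.V := ⟨M.vinc ε₁⟩
  set f : M.V → ℕ := fun w => ∑ k, M.graph.dist w (M.vinc (ε k))
  set m := Function.argmin f
  have hm : ∀ v, M.graph.dist m v = 0 ↔ m = v := fun v => htree.connected.dist_eq_zero_iff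
  obtain ⟨x, hx, hx₀, hx₁⟩ := exists_root_colors hab (fun k => M.graph.dist m (M.vinc (ε k)))
    (by by_contra! h; exact hv13 (((hm _).1 h.1).symm.trans ((hm _).1 h.2)))
    (fun h => by
      obtain hm₂ : m = M.vinc ε₂ := (hm _).1 h
      by_contra! h'
      exact hmid ⟨by rw [SimpleGraph.dist_comm, ← hm₂]; exact h'.1, by rw [← hm₂]; exact h'.2⟩)
  obtain ⟨φE, φS, hφ, hdem⟩ := Multipole.exists_isTait_of_leadsTo htree hloopless hsimple
    hcubic m ε ![a, b, a] x hx
    (Multipole.leadsTo_unique_of_isMin htree hloopless ε hε fun w => Function.argmin_le f w)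
    (fun k hk => hx₀ k ((hm _).2 hk.symm))
    (fun k hk => hx₁ k (SimpleGraph.dist_eq_one_iff_adj.2 hk))
  exact ⟨φE, φS, hφ, hdem 0, hdem 1, hdem 2⟩

/-- Let `T` be a tree multipole (cubic, no free edges, no loops or multiple edges, and the
underlying graph is a tree) with a Tait coloring, and let `ε₁, ε₂, ε₃` be three distinct
semiedges incident to vertices `v₁, v₂, v₃`. If `v₁ ≠ v₃` and it is not the case that
`d(v₁,v₂) = d(v₂,v₃) = 1`, then for any two distinct colors `a, b` there is a Tait
coloring giving `ε₁, ε₂, ε₃` the colors `a, b, a`. -/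
theorem tree_multipole_aba_state (M : Multipole) (hcubic : M.IsCubic)
    (hnoF : IsEmpty M.F)
    (hloopless : ∀ e : M.E, (M.ends e).1 ≠ (M.ends e).2)
    (hsimple : Function.Injective (fun e : M.E => s((M.ends e).1, (M.ends e).2)))
    (htree : M.graph.IsTree)
    (hTaitable : ∃ φE φS, M.IsTait φE φS)
    (ε₁ ε₂ ε₃ : M.S)
    (h12 : ε₁ ≠ ε₂) (h13 : ε₁ ≠ ε₃) (h23 : ε₂ ≠ ε₃)
    (hv13 : M.vinc ε₁ ≠ M.vinc ε₃)
    (hmid : ¬(M.graph.dist (M.vinc ε₁) (M.vinc ε₂) = 1 ∧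
              M.graph.dist (M.vinc ε₂) (M.vinc ε₃) = 1)) :
    ∀ a b : Fin 3, a ≠ b →
      ∃ φE φS, M.IsTait φE φS ∧ φS ε₁ = a ∧ φS ε₂ = b ∧ φS ε₃ = a :=
  tree_multipole_aba_state_general M hcubic hloopless hsimple htree ε₁ ε₂ ε₃ h12 h23 hv13 hmid
end
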